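/- Backward–forward identity: if x ∈ R_fin and there is y ∈ R_0 with f_I^[k](y) = x for some k, then there exist ε_1,...,ε_n ∈ {0,1} with Σ_{i=1}^n ε_i·A_i = B; consequently the configuration c = (1,0,ε_1,...,ε_n) satisfies f_I^[k](⟨c⟩) ∈ R_fin. -/

import Mathlib

noncomputable section

def pp (n : ℕ) : ℕ := Nat.clog 2 (n + 2)
def ww (B : ℕ) : ℕ := Nat.clog 2 (B + 2)
def qq (n B : ℕ) : ℕ := pp n + ww B + 1

def tp (n : ℕ) : ℝ := (2 : ℝ) ^ (-(pp n : ℤ))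
def tp1 (n : ℕ) : ℝ := (2 : ℝ) ^ (-(pp n : ℤ) - 1)
def tq (n B : ℕ) : ℝ := (2 : ℝ) ^ (-(qq n B : ℤ))
def bI (k : ℤ) : ℝ := (5 : ℝ) ^ (-k)

def TI (n B : ℕ) (A : ℕ → ℕ) (c : ℕ × ℕ × (ℕ → ℕ)) : ℕ × ℕ × (ℕ → ℕ) :=
  if c.1 = n + 1 then c
  else (c.1 + 1, min (B + 1) (c.2.1 + c.2.2 c.1 * A c.1), c.2.2)

def enc (n B : ℕ) (c : ℕ × ℕ × (ℕ → ℕ)) : ℝ × ℝ :=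
  ((c.1 : ℝ) * tp n + (c.2.1 : ℝ) * tq n B,
   bI ((n : ℤ) + 1) + ∑ j ∈ Finset.Icc c.1 n, ((3 * c.2.2 j + 1 : ℕ) : ℝ) * bI (j : ℤ))

def inR0 (n : ℕ) (x : ℝ × ℝ) : Prop :=
  0 ≤ x.1 ∧ x.1 ≤ tp1 n ∧ 0 ≤ x.2 ∧ x.2 ≤ 1

def inRi (n i : ℕ) (x : ℝ × ℝ) : Prop :=
  (i : ℝ) * tp n ≤ x.1 ∧ x.1 ≤ (i : ℝ) * tp n + tp1 n ∧ 0 ≤ x.2 ∧ x.2 ≤ bI ((i : ℤ) - 1)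

def inRia (n i α : ℕ) (x : ℝ × ℝ) : Prop :=
  (i : ℝ) * tp n ≤ x.1 ∧ x.1 ≤ (i : ℝ) * tp n + tp1 n ∧
    (α : ℝ) * bI (i : ℤ) ≤ x.2 ∧ x.2 ≤ ((α : ℝ) + 1) * bI (i : ℤ)

def in4lin (n B : ℕ) (A : ℕ → ℕ) (i : ℕ) (x : ℝ × ℝ) : Prop :=
  inRia n i 4 x ∧ x.1 ≤ (i : ℝ) * tp n + ((B : ℝ) + 1 - (A i : ℝ)) * tq n B

def in4sat (n B : ℕ) (A : ℕ → ℕ) (i : ℕ) (x : ℝ × ℝ) : Prop :=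
  inRia n i 4 x ∧ (i : ℝ) * tp n + ((B : ℝ) + 1 - (A i : ℝ)) * tq n B ≤ x.1

def in3lin (n B : ℕ) (A : ℕ → ℕ) (i : ℕ) (x : ℝ × ℝ) : Prop :=
  inRia n i 3 x ∧
    (x.2 * (5 : ℝ) ^ (i : ℤ) - 3) * (tp1 n - ((B : ℝ) + 1 - (A i : ℝ)) * tq n B) ≤
      tp1 n + (i : ℝ) * tp n - x.1

def in3sat (n B : ℕ) (A : ℕ → ℕ) (i : ℕ) (x : ℝ × ℝ) : Prop :=
  inRia n i 3 x ∧
    tp1 n + (i : ℝ) * tp n - x.1 ≤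
      (x.2 * (5 : ℝ) ^ (i : ℤ) - 3) * (tp1 n - ((B : ℝ) + 1 - (A i : ℝ)) * tq n B)

open scoped Classical in
def fI (n B : ℕ) (A : ℕ → ℕ) (x : ℝ × ℝ) : ℝ × ℝ :=
  if inR0 n x then (tp n, x.2)
  else if inRi n (n + 1) x then x
  else if _h : ∃ i, 1 ≤ i ∧ i ≤ n ∧ inRia n i 0 x then (x.1 + tp n, 0)
  else if h : ∃ i, 1 ≤ i ∧ i ≤ n ∧ inRia n i 1 x then
    (x.1 + tp n, x.2 - bI (h.choose : ℤ))
  else if h : ∃ i, 1 ≤ i ∧ i ≤ n ∧ inRia n i 2 x then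
    (x.1 + tp n, 3 * bI (h.choose : ℤ) - x.2)
  else if h : ∃ i, 1 ≤ i ∧ i ≤ n ∧ in3lin n B A i x then
    (x.1 + tp n + (A h.choose : ℝ) * tq n B * (x.2 * (5 : ℝ) ^ (h.choose : ℤ) - 3), 0)
  else if h : ∃ i, 1 ≤ i ∧ i ≤ n ∧ in3sat n B A i x then
    (((h.choose : ℝ) + 3 / 2) * tp n -
      (x.2 * (5 : ℝ) ^ (h.choose : ℤ) - 3) * (tp1 n - ((B : ℝ) + 1) * tq n B), 0)
  else if h : ∃ i, 1 ≤ i ∧ i ≤ n ∧ in4lin n B A i x then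
    (x.1 + tp n + (A h.choose : ℝ) * tq n B, x.2 - 4 * bI (h.choose : ℤ))
  else if h : ∃ i, 1 ≤ i ∧ i ≤ n ∧ in4sat n B A i x then
    (((h.choose : ℝ) + 1) * tp n + ((B : ℝ) + 1) * tq n B, x.2 - 4 * bI (h.choose : ℤ))
  else x

def inRfin (n B : ℕ) (x : ℝ × ℝ) : Prop :=
  ((n : ℝ) + 1) * tp n + (B : ℝ) * tq n B - (2 : ℝ) ^ (-(qq n B : ℤ) - 1) ≤ x.1 ∧
  x.1 ≤ ((n : ℝ) + 1) * tp n + (B : ℝ) * tq n B ∧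
  bI ((n : ℤ) + 1) ≤ x.2 ∧ x.2 ≤ 2 * bI ((n : ℤ) + 1)

end


/-!
Read a digit off each step of the orbit of `y`: in strip `i` the map acts according to the band
of height `5^{-i}` containing the second coordinate. Bands 0 and 3 drop the point onto the line
`x.2 = 0`, which it never leaves, so it cannot reach `R_fin`; bands 1 and 2 keep the register
(digit 0) and band 4 adds `A_i`, saturating at `B + 1` (digit 1). Hence an orbit reaching `R_fin`
follows, in its first coordinate, the run of `TI` on these digits, and landing in `R_fin` forces
the final register to be exactly `B`; being unsaturated, it is `∑ ε_i A_i`. Conversely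
`fI ∘ enc = enc ∘ TI` on admissible configurations, so the encoded configuration makes the same
run and lands in `R_fin` too.
-/

open Finset Function

lemma tp_pos (n : ℕ) : 0 < tp n := zpow_pos two_pos _

lemma tq_pos (n B : ℕ) : 0 < tq n B := zpow_pos two_pos _

lemma bI_pos (k : ℤ) : 0 < bI k := zpow_pos (by norm_num) _

lemma tp1_eq_half (n : ℕ) : tp1 n = tp n / 2 := by
  rw [tp1, tp, zpow_sub₀ two_ne_zero, zpow_one]

lemma two_zpow_neg_qq_sub_one (n B : ℕ) : (2 : ℝ) ^ (-(qq n B : ℤ) - 1) = tq n B / 2 := by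
  rw [tq, zpow_sub₀ two_ne_zero, zpow_one]

lemma bI_eq_five_mul (k : ℤ) : bI k = 5 * bI (k + 1) := by
  rw [bI, bI, neg_add, zpow_add₀ (by norm_num), zpow_neg_one]
  ring

lemma bI_natCast_eq_five_mul (i : ℕ) : bI (i : ℤ) = 5 * bI ((i + 1 : ℕ) : ℤ) := by
  rw [bI_eq_five_mul]
  push_cast
  rfl

lemma bI_mul_five_zpow (k : ℤ) : bI k * 5 ^ k = 1 := by
  rw [bI, zpow_neg, inv_mul_cancel₀ (by positivity)]

/-- Since `2 ^ ww B ≥ B + 2`, a register value `s ≤ B + 1` fits in the left half of a strip. -/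
lemma succ_mul_tq_le_tp1 (n B : ℕ) : ((B : ℝ) + 1) * tq n B ≤ tp1 n := by
  have hw : (B : ℝ) + 2 ≤ 2 ^ ww B := by exact_mod_cast Nat.le_pow_clog one_lt_two (B + 2)
  have htq : tq n B * 2 ^ ww B = tp1 n := by
    rw [tq, tp1, qq, ← zpow_natCast, ← zpow_add₀ two_ne_zero]
    congr 1
    push_cast
    ring
  nlinarith [tq_pos n B]

def InStrip (n i : ℕ) (x : ℝ × ℝ) : Prop :=
  (i : ℝ) * tp n ≤ x.1 ∧ x.1 ≤ (i : ℝ) * tp n + tp1 n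

lemma inRia.inStrip {n i α : ℕ} {x : ℝ × ℝ} (h : inRia n i α x) : InStrip n i x := ⟨h.1, h.2.1⟩

namespace InStrip

variable {n i j : ℕ} {x : ℝ × ℝ}

lemma eq (hi : InStrip n i x) (hj : InStrip n j x) : j = i := by
  have := tp_pos n
  have := tp1_eq_half n
  have hji : (j : ℝ) < i + 1 := by nlinarith [hi.2, hj.1]
  have hij : (i : ℝ) < j + 1 := by nlinarith [hi.1, hj.2]
  have : j < i + 1 := by exact_mod_cast hji
  have : i < j + 1 := by exact_mod_cast hij
  omega

lemma add_tp (hx : InStrip n i x) (z : ℝ) : InStrip n (i + 1) (x.1 + tp n, z) := by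
  constructor <;> push_cast <;> linarith [hx.1, hx.2]

lemma not_inR0 (hx : InStrip n i x) (hi : 1 ≤ i) : ¬ inR0 n x := fun h => by
  have : (1 : ℝ) ≤ i := by exact_mod_cast hi
  nlinarith [tp_pos n, tp1_eq_half n, hx.1, h.2.1]

lemma not_inRi_succ (hx : InStrip n i x) (hi : i ≤ n) : ¬ inRi n (n + 1) x := fun h => by
  have := hx.eq ⟨h.1, h.2.1⟩
  omega

lemma not_exists_band {α : ℕ} {P : ℕ → Prop} (hx : InStrip n i x)
    (hP : ∀ i', P i' → inRia n i' α x) (h : ((α : ℝ) + 1) * bI i < x.2) :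
    ¬ ∃ i', 1 ≤ i' ∧ i' ≤ n ∧ P i' := by
  rintro ⟨i', -, -, hi'⟩
  obtain rfl := hx.eq (hP i' hi').inStrip
  linarith [(hP _ hi').2.2.2]

lemma choose_eq {P : ℕ → Prop} (hx : InStrip n i x) (hP : ∀ i', P i' → InStrip n i' x)
    (h : ∃ i', 1 ≤ i' ∧ i' ≤ n ∧ P i') : h.choose = i :=
  hx.eq (hP _ h.choose_spec.2.2)

end InStrip

section Bands

variable {n B : ℕ} {A : ℕ → ℕ} {i : ℕ} {x : ℝ × ℝ}

lemma fI_of_inR0 (hx : inR0 n x) : fI n B A x = (tp n, x.2) := if_pos hx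

lemma fI_eq_self_of_inStrip_succ (hx : InStrip n (n + 1) x) (h0 : 0 ≤ x.2)
    (h1 : x.2 ≤ bI n) : fI n B A x = x := by
  have hR : inRi n (n + 1) x := ⟨hx.1, hx.2, h0, by simpa using h1⟩
  rw [fI, if_neg (hx.not_inR0 (by omega)), if_pos hR]

lemma fI_eq_of_band_zero (hi : 1 ≤ i) (hin : i ≤ n) (hx : InStrip n i x) (h0 : 0 ≤ x.2)
    (h1 : x.2 ≤ bI i) : fI n B A x = (x.1 + tp n, 0) := by
  have hR : inRia n i 0 x := ⟨hx.1, hx.2, by simpa using h0, by simpa using h1⟩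
  rw [fI, if_neg (hx.not_inR0 hi), if_neg (hx.not_inRi_succ hin), dif_pos ⟨i, hi, hin, hR⟩]

lemma fI_eq_of_band_one (hi : 1 ≤ i) (hin : i ≤ n) (hx : InStrip n i x) (h1 : bI i < x.2)
    (h2 : x.2 ≤ 2 * bI i) : fI n B A x = (x.1 + tp n, x.2 - bI i) := by
  have hE : ∃ i', 1 ≤ i' ∧ i' ≤ n ∧ inRia n i' 1 x :=
    ⟨i, hi, hin, hx.1, hx.2, by simpa using h1.le, by norm_num; linarith⟩
  rw [fI, if_neg (hx.not_inR0 hi), if_neg (hx.not_inRi_succ hin),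
    dif_neg (hx.not_exists_band (α := 0) (fun _ => id) (by simpa using h1)), dif_pos hE,
    hx.choose_eq (fun _ => inRia.inStrip) hE]

lemma fI_eq_of_band_two (hi : 1 ≤ i) (hin : i ≤ n) (hx : InStrip n i x) (h2 : 2 * bI i < x.2)
    (h3 : x.2 ≤ 3 * bI i) : fI n B A x = (x.1 + tp n, 3 * bI i - x.2) := by
  have hE : ∃ i', 1 ≤ i' ∧ i' ≤ n ∧ inRia n i' 2 x :=
    ⟨i, hi, hin, hx.1, hx.2, by norm_num; linarith, by norm_num; linarith⟩
  rw [fI, if_neg (hx.not_inR0 hi), if_neg (hx.not_inRi_succ hin),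
    dif_neg (hx.not_exists_band (α := 0) (fun _ => id) (by norm_num; linarith [bI_pos i])),
    dif_neg (hx.not_exists_band (α := 1) (fun _ => id) (by norm_num; linarith)), dif_pos hE,
    hx.choose_eq (fun _ => inRia.inStrip) hE]

lemma fI_of_band_three (hi : 1 ≤ i) (hin : i ≤ n) (hx : InStrip n i x) (h3 : 3 * bI i < x.2)
    (h4 : x.2 ≤ 4 * bI i) : InStrip n (i + 1) (fI n B A x) ∧ (fI n B A x).2 = 0 := by
  have hR : inRia n i 3 x := ⟨hx.1, hx.2, by norm_num; linarith, by norm_num; linarith⟩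
  have h5 := zpow_pos (by norm_num : (0 : ℝ) < 5) (i : ℤ)
  have hθ0 : 0 ≤ x.2 * 5 ^ (i : ℤ) - 3 := by nlinarith [bI_mul_five_zpow i]
  have hθ1 : x.2 * 5 ^ (i : ℤ) - 3 ≤ 1 := by nlinarith [bI_mul_five_zpow i]
  have hgap : 0 ≤ tp1 n - ((B : ℝ) + 1) * tq n B := by linarith [succ_mul_tq_le_tp1 n B]
  have hθgap := mul_le_mul_of_nonneg_right hθ1 hgap
  have hθgap' := mul_nonneg hθ0 hgap
  have := tp1_eq_half n
  have := tp_pos n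
  rw [fI, if_neg (hx.not_inR0 hi), if_neg (hx.not_inRi_succ hin),
    dif_neg (hx.not_exists_band (α := 0) (fun _ => id) (by norm_num; linarith [bI_pos i])),
    dif_neg (hx.not_exists_band (α := 1) (fun _ => id) (by norm_num; linarith [bI_pos i])),
    dif_neg (hx.not_exists_band (α := 2) (fun _ => id) (by norm_num; linarith))]
  by_cases hL : (x.2 * 5 ^ (i : ℤ) - 3) * (tp1 n - ((B : ℝ) + 1 - (A i : ℝ)) * tq n B) ≤
      tp1 n + (i : ℝ) * tp n - x.1
  · have hE : ∃ i', 1 ≤ i' ∧ i' ≤ n ∧ in3lin n B A i' x := ⟨i, hi, hin, hR, hL⟩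
    rw [dif_pos hE, hx.choose_eq (fun _ h => h.1.inStrip) hE]
    have hA : 0 ≤ (A i : ℝ) * tq n B * (x.2 * 5 ^ (i : ℤ) - 3) := by
      have := tq_pos n B
      positivity
    refine ⟨⟨?_, ?_⟩, rfl⟩ <;> push_cast <;> nlinarith [hx.1]
  · have hE : ∃ i', 1 ≤ i' ∧ i' ≤ n ∧ in3sat n B A i' x := ⟨i, hi, hin, hR, (not_le.1 hL).le⟩
    have hnL : ¬ ∃ i', 1 ≤ i' ∧ i' ≤ n ∧ in3lin n B A i' x := by
      rintro ⟨i', -, -, hR', hL'⟩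
      obtain rfl := hx.eq hR'.inStrip
      exact hL hL'
    rw [dif_neg hnL, dif_pos hE, hx.choose_eq (fun _ h => h.1.inStrip) hE]
    have hreg : 0 ≤ ((B : ℝ) + 1) * tq n B := by have := tq_pos n B; positivity
    refine ⟨⟨?_, ?_⟩, rfl⟩ <;> push_cast <;> nlinarith

lemma fI_eq_of_band_four {s : ℕ} (hi : 1 ≤ i) (hin : i ≤ n) (hs : s ≤ B + 1)
    (hx1 : x.1 = i * tp n + s * tq n B) (h4 : 4 * bI i < x.2) (h5 : x.2 ≤ 5 * bI i) :
    fI n B A x = ((i + 1) * tp n + (min (B + 1) (s + A i) : ℕ) * tq n B, x.2 - 4 * bI i) := by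
  have hsR : (s : ℝ) ≤ B + 1 := by exact_mod_cast hs
  have hx : InStrip n i x := by
    constructor <;> nlinarith [tq_pos n B, succ_mul_tq_le_tp1 n B]
  have hR : inRia n i 4 x := ⟨hx.1, hx.2, by norm_num; linarith, by norm_num; linarith⟩
  rw [fI, if_neg (hx.not_inR0 hi), if_neg (hx.not_inRi_succ hin),
    dif_neg (hx.not_exists_band (α := 0) (fun _ => id) (by norm_num; linarith [bI_pos i])),
    dif_neg (hx.not_exists_band (α := 1) (fun _ => id) (by norm_num; linarith [bI_pos i])),
    dif_neg (hx.not_exists_band (α := 2) (fun _ => id) (by norm_num; linarith [bI_pos i])),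
    dif_neg (hx.not_exists_band (P := (in3lin n B A · x)) (fun _ h => h.1) (by norm_num; linarith)),
    dif_neg (hx.not_exists_band (P := (in3sat n B A · x)) (fun _ h => h.1) (by norm_num; linarith))]
  by_cases hsA : s + A i ≤ B + 1
  · have hc : x.1 ≤ i * tp n + ((B : ℝ) + 1 - A i) * tq n B := by
      have : (s : ℝ) + A i ≤ B + 1 := by exact_mod_cast hsA
      nlinarith [tq_pos n B]
    have hE : ∃ i', 1 ≤ i' ∧ i' ≤ n ∧ in4lin n B A i' x := ⟨i, hi, hin, hR, hc⟩
    rw [dif_pos hE, hx.choose_eq (fun _ h => h.1.inStrip) hE, min_eq_right hsA, hx1]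
    push_cast
    congr 1
    ring
  · have hc : i * tp n + ((B : ℝ) + 1 - A i) * tq n B < x.1 := by
      have : (B : ℝ) + 1 < s + A i := by exact_mod_cast not_le.1 hsA
      nlinarith [tq_pos n B]
    have hE : ∃ i', 1 ≤ i' ∧ i' ≤ n ∧ in4sat n B A i' x := ⟨i, hi, hin, hR, hc.le⟩
    have hnL : ¬ ∃ i', 1 ≤ i' ∧ i' ≤ n ∧ in4lin n B A i' x := by
      rintro ⟨i', -, -, hR', hL'⟩
      obtain rfl := hx.eq hR'.inStrip
      linarith
    rw [dif_neg hnL, dif_pos hE, hx.choose_eq (fun _ h => h.1.inStrip) hE,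
      min_eq_left (not_le.1 hsA).le]
    push_cast
    rfl

end Bands

def Absorbed (n : ℕ) (x : ℝ × ℝ) : Prop :=
  x.2 = 0 ∧ ∃ i, 1 ≤ i ∧ i ≤ n + 1 ∧ InStrip n i x

lemma mapsTo_fI_absorbed (n B : ℕ) (A : ℕ → ℕ) :
    Set.MapsTo (fI n B A) {x | Absorbed n x} {x | Absorbed n x} := by
  rintro x ⟨h0, i, hi, hin, hx⟩
  rcases hin.lt_or_eq with hlt | rfl
  · rw [fI_eq_of_band_zero hi (by omega) hx h0.ge (h0 ▸ (bI_pos i).le)]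
    exact ⟨rfl, i + 1, by omega, by omega, hx.add_tp 0⟩
  · rw [fI_eq_self_of_inStrip_succ hx h0.ge (h0 ▸ (bI_pos n).le)]
    exact ⟨h0, n + 1, by omega, le_rfl, hx⟩

section Configurations

variable {n B : ℕ} {A : ℕ → ℕ}

/-- A configuration is `(head, register, digits)`; this is the invariant of the runs of `TI`
from `(1, 0, ε)`. -/
structure Admissible (n B : ℕ) (A : ℕ → ℕ) (c : ℕ × ℕ × (ℕ → ℕ)) : Prop where
  one_le : 1 ≤ c.1
  le_succ : c.1 ≤ n + 1
  reg_le : c.2.1 ≤ B + 1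
  digit_le : ∀ j, c.2.2 j ≤ 1
  reg_eq_sum : c.2.1 ≤ B → c.2.1 = ∑ j ∈ Ico 1 c.1, c.2.2 j * A j

lemma admissible_start {ε : ℕ → ℕ} (hε : ∀ j, ε j ≤ 1) : Admissible n B A (1, 0, ε) :=
  ⟨le_rfl, by simp, by simp, hε, fun _ => by simp⟩

lemma TI_of_le {i s : ℕ} {ε : ℕ → ℕ} (hi : i ≤ n) :
    TI n B A (i, s, ε) = (i + 1, min (B + 1) (s + ε i * A i), ε) :=
  if_neg (by simp only; omega)

lemma TI_of_fst_eq {c : ℕ × ℕ × (ℕ → ℕ)} (hc : c.1 = n + 1) : TI n B A c = c := if_pos hc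

lemma fst_TI {c : ℕ × ℕ × (ℕ → ℕ)} (hc : c.1 ≤ n + 1) :
    (TI n B A c).1 = min (c.1 + 1) (n + 1) := by
  unfold TI
  split_ifs <;> omega

lemma snd_snd_TI (c : ℕ × ℕ × (ℕ → ℕ)) : (TI n B A c).2.2 = c.2.2 := by
  unfold TI
  split_ifs <;> rfl

lemma Admissible.TI {c : ℕ × ℕ × (ℕ → ℕ)} (hc : Admissible n B A c) :
    Admissible n B A (TI n B A c) := by
  obtain ⟨i, s, ε⟩ := c
  rcases hc.le_succ.lt_or_eq with hi | hi
  · rw [TI_of_le (by omega)]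
    refine ⟨by omega, by simp only; omega, min_le_left _ _, hc.digit_le, fun hB => ?_⟩
    have hsB : s + ε i * A i ≤ B := by simp only at hB; omega
    rw [min_eq_right (by omega), sum_Ico_succ_top hc.one_le,
      ← hc.reg_eq_sum (by simp only; omega)]
  · rwa [TI_of_fst_eq hi]

lemma mapsTo_TI_admissible :
    Set.MapsTo (TI n B A) {c | Admissible n B A c} {c | Admissible n B A c} :=
  fun _ hc => hc.TI

lemma fst_TI_iterate {c : ℕ × ℕ × (ℕ → ℕ)} (hc : c.1 ≤ n + 1) (m : ℕ) :
    ((TI n B A)^[m] c).1 = min (c.1 + m) (n + 1) := by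
  induction m with
  | zero => simp [hc]
  | succ m ih =>
    rw [iterate_succ_apply', fst_TI (by omega), ih]
    omega

lemma snd_snd_TI_iterate (c : ℕ × ℕ × (ℕ → ℕ)) (m : ℕ) : ((TI n B A)^[m] c).2.2 = c.2.2 := by
  induction m with
  | zero => rfl
  | succ m ih => rw [iterate_succ_apply', snd_snd_TI, ih]

end Configurations

section Encoding

variable {n B : ℕ} {A : ℕ → ℕ}

lemma fst_enc (c : ℕ × ℕ × (ℕ → ℕ)) : (enc n B c).1 = c.1 * tp n + c.2.1 * tq n B := rfl

lemma inStrip_of_fst_eq_enc {c : ℕ × ℕ × (ℕ → ℕ)} {z : ℝ × ℝ} (hs : c.2.1 ≤ B + 1)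
    (hz : z.1 = (enc n B c).1) : InStrip n c.1 z := by
  have hsR : (c.2.1 : ℝ) ≤ B + 1 := by exact_mod_cast hs
  rw [InStrip, hz, fst_enc]
  constructor <;>
    nlinarith [tq_pos n B, succ_mul_tq_le_tp1 n B, (Nat.cast_nonneg c.2.1 : (0 : ℝ) ≤ _)]

lemma snd_enc_of_le {i s s' : ℕ} {ε : ℕ → ℕ} (hi : i ≤ n) :
    (enc n B (i, s, ε)).2 = ((3 * ε i + 1 : ℕ) : ℝ) * bI i + (enc n B (i + 1, s', ε)).2 := by
  simp only [enc]
  rw [← sum_Ioc_add_eq_sum_Icc hi, Icc_add_one_left_eq_Ioc]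
  ring

lemma snd_enc_pos (c : ℕ × ℕ × (ℕ → ℕ)) : 0 < (enc n B c).2 :=
  add_pos_of_pos_of_nonneg (bI_pos _)
    (sum_nonneg fun _ _ => mul_nonneg (Nat.cast_nonneg _) (bI_pos _).le)

lemma snd_enc_le {i s : ℕ} {ε : ℕ → ℕ} (hε : ∀ j, ε j ≤ 1) (hi : i ≤ n + 1) :
    (enc n B (i, s, ε)).2 ≤ 5 * bI i := by
  induction hd : n + 1 - i generalizing i with
  | zero =>
    obtain rfl : i = n + 1 := by omega
    simp [enc, bI_pos]
  | succ d ih =>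
    rw [snd_enc_of_le (s' := s) (by omega), bI_natCast_eq_five_mul i]
    have h4 : ((3 * ε i + 1 : ℕ) : ℝ) ≤ 4 := by exact_mod_cast (by have := hε i; omega)
    nlinarith [ih (i := i + 1) (by omega) (by omega), bI_pos ((i + 1 : ℕ) : ℤ)]

lemma fI_enc {c : ℕ × ℕ × (ℕ → ℕ)} (hc : Admissible n B A c) :
    fI n B A (enc n B c) = enc n B (TI n B A c) := by
  obtain ⟨i, s, ε⟩ := c
  have hε : ∀ j, ε j ≤ 1 := hc.digit_le
  have hx := inStrip_of_fst_eq_enc (n := n) (B := B) (z := enc n B (i, s, ε)) hc.reg_le rfl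
  rcases hc.le_succ.lt_or_eq with hi | hi
  · have hin : i ≤ n := by omega
    rw [TI_of_le hin]
    set s' := min (B + 1) (s + ε i * A i)
    have hsplit := snd_enc_of_le (n := n) (B := B) (s := s) (s' := s') (ε := ε) hin
    have hpos := snd_enc_pos (n := n) (B := B) (i + 1, s', ε)
    have hle := snd_enc_le (n := n) (B := B) (s := s') hε (i := i + 1) (by omega)
    rw [← bI_natCast_eq_five_mul] at hle
    obtain h0 | h1 : ε i = 0 ∨ ε i = 1 := Nat.le_one_iff_eq_zero_or_eq_one.1 (hε i)
    · simp only [h0, mul_zero, zero_add, Nat.cast_one, one_mul] at hsplit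
      rw [fI_eq_of_band_one hc.one_le hin hx (by linarith) (by linarith)]
      refine Prod.ext ?_ (by simp only; linarith)
      simp only [fst_enc, s', h0, zero_mul, add_zero, min_eq_right hc.reg_le]
      push_cast
      ring
    · norm_num [h1] at hsplit
      rw [fI_eq_of_band_four hc.one_le hin hc.reg_le rfl (by linarith) (by linarith)]
      refine Prod.ext ?_ (by simp only; linarith)
      simp only [fst_enc, s', h1, one_mul]
      push_cast
      ring
  · rw [TI_of_fst_eq hi]
    subst hi
    refine fI_eq_self_of_inStrip_succ hx (snd_enc_pos _).le ?_
    rw [bI_natCast_eq_five_mul]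
    exact snd_enc_le hc.digit_le le_rfl

lemma fI_iterate_enc {c : ℕ × ℕ × (ℕ → ℕ)} (hc : Admissible n B A c) (k : ℕ) :
    (fI n B A)^[k] (enc n B c) = enc n B ((TI n B A)^[k] c) := by
  have hsc : Semiconj (fun c : {c | Admissible n B A c} => enc n B c.1)
      (mapsTo_TI_admissible.restrict _ _ _) (fI n B A) := fun c => (fI_enc c.2).symm
  have := hsc.iterate_right k ⟨c, hc⟩
  rw [Set.MapsTo.iterate_restrict] at this
  exact this.symm

end Encoding

section Tracking

variable {n B : ℕ} {A : ℕ → ℕ}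

/-- The bound on `z.2` is the range of `(enc n B c).2` over all digit sequences. -/
def Tracks (n B : ℕ) (c : ℕ × ℕ × (ℕ → ℕ)) (z : ℝ × ℝ) : Prop :=
  z.1 = (enc n B c).1 ∧ 0 ≤ z.2 ∧ z.2 ≤ 5 * bI c.1

lemma Tracks.fI_eq_self {c : ℕ × ℕ × (ℕ → ℕ)} {z : ℝ × ℝ} (hc : Admissible n B A c)
    (htop : c.1 = n + 1) (hz : Tracks n B c z) : fI n B A z = z := by
  have hx := inStrip_of_fst_eq_enc hc.reg_le hz.1
  rw [htop] at hx
  refine fI_eq_self_of_inStrip_succ hx hz.2.1 ?_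
  rw [bI_natCast_eq_five_mul, ← htop]
  exact hz.2.2

lemma Tracks.fI {c : ℕ × ℕ × (ℕ → ℕ)} {z : ℝ × ℝ} (hc : Admissible n B A c) (hcn : c.1 ≤ n)
    (hz : Tracks n B c z) (hd : c.2.2 c.1 = if 4 * bI c.1 < z.2 then 1 else 0) :
    Absorbed n (fI n B A z) ∨ Tracks n B (TI n B A c) (fI n B A z) := by
  obtain ⟨i, s, ε⟩ := c
  obtain ⟨hz1, hz0, hz5⟩ := hz
  have hx := inStrip_of_fst_eq_enc hc.reg_le hz1
  have hi : 1 ≤ i := hc.one_le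
  have hs : s ≤ B + 1 := hc.reg_le
  simp only at hcn hd hz5 hx
  have h5 := bI_natCast_eq_five_mul i
  rw [TI_of_le hcn]
  have hfst_of_digit_zero (h : z.2 ≤ 4 * bI i) :
      (enc n B (i + 1, min (B + 1) (s + ε i * A i), ε)).1 = z.1 + tp n := by
    rw [if_neg (not_lt.2 h)] at hd
    simp only [fst_enc] at hz1 ⊢
    rw [hd, zero_mul, add_zero, min_eq_right hs, hz1]
    push_cast
    ring
  rcases le_or_gt z.2 (bI i) with h1 | h1
  · rw [fI_eq_of_band_zero hi hcn hx hz0 h1]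
    exact Or.inl ⟨rfl, i + 1, by omega, by omega, hx.add_tp 0⟩
  rcases le_or_gt z.2 (2 * bI i) with h2 | h2
  · rw [fI_eq_of_band_one hi hcn hx h1 h2]
    exact Or.inr ⟨(hfst_of_digit_zero (by linarith [bI_pos i])).symm, by simp only; linarith,
      by simp only; linarith⟩
  rcases le_or_gt z.2 (3 * bI i) with h3 | h3
  · rw [fI_eq_of_band_two hi hcn hx h2 h3]
    exact Or.inr ⟨(hfst_of_digit_zero (by linarith [bI_pos i])).symm, by simp only; linarith,
      by simp only; linarith⟩
  rcases le_or_gt z.2 (4 * bI i) with h4 | h4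
  · obtain ⟨hx', h0⟩ := fI_of_band_three (B := B) (A := A) hi hcn hx h3 h4
    exact Or.inl ⟨h0, i + 1, by omega, by omega, hx'⟩
  · rw [if_pos h4] at hd
    rw [fI_eq_of_band_four hi hcn hs hz1 h4 hz5]
    refine Or.inr ⟨?_, by simp only; linarith, by simp only; linarith⟩
    simp only [fst_enc, hd, one_mul]
    push_cast
    ring

noncomputable def orbitDigit (n B : ℕ) (A : ℕ → ℕ) (y : ℝ × ℝ) (j : ℕ) : ℕ :=
  if 4 * bI j < ((fI n B A)^[j] y).2 then 1 else 0

lemma orbitDigit_le_one (y : ℝ × ℝ) (j : ℕ) : orbitDigit n B A y j ≤ 1 := by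
  unfold orbitDigit
  split_ifs <;> omega

lemma absorbed_or_tracks_iterate {y : ℝ × ℝ} (hy : inR0 n y) (j : ℕ) :
    Absorbed n ((fI n B A)^[j + 1] y) ∨
      Tracks n B ((TI n B A)^[j] (1, 0, orbitDigit n B A y)) ((fI n B A)^[j + 1] y) := by
  set c₀ : ℕ × ℕ × (ℕ → ℕ) := (1, 0, orbitDigit n B A y)
  have hc₀ : Admissible n B A c₀ := admissible_start (orbitDigit_le_one y)
  induction j with
  | zero =>
    rw [zero_add, iterate_one, fI_of_inR0 hy, iterate_zero_apply]
    refine Or.inr ⟨by simp [c₀, fst_enc], hy.2.2.1, ?_⟩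
    simpa [c₀, bI] using hy.2.2.2
  | succ j ih =>
    rw [iterate_succ_apply' (fI n B A) (j + 1)]
    rcases ih with habs | htr
    · exact Or.inl (mapsTo_fI_absorbed n B A habs)
    have hc := (mapsTo_TI_admissible.iterate j) hc₀
    rw [iterate_succ_apply' (TI n B A) j]
    rcases hc.le_succ.lt_or_eq with hlt | htop
    · have hj : ((TI n B A)^[j] c₀).1 = j + 1 := by
        have h1 : c₀.1 = 1 := rfl
        rw [fst_TI_iterate hc₀.le_succ] at hlt ⊢
        omega
      refine htr.fI hc (by omega) ?_
      rw [snd_snd_TI_iterate, hj]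
      rfl
    · rw [htr.fI_eq_self hc htop, TI_of_fst_eq htop]
      exact Or.inr htr

end Tracking

section FinalRegion

variable {n B : ℕ} {x : ℝ × ℝ}

lemma not_inRfin_of_fst_le (h : x.1 ≤ n * tp n + tp1 n) : ¬ inRfin n B x := by
  rintro ⟨h1, -⟩
  rw [two_zpow_neg_qq_sub_one] at h1
  nlinarith [tp1_eq_half n, succ_mul_tq_le_tp1 n B, tq_pos n B,
    mul_nonneg (Nat.cast_nonneg B : (0 : ℝ) ≤ B) (tq_pos n B).le]

lemma eq_of_fst_eq_of_inRfin {s : ℕ} (hx : inRfin n B x)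
    (hx1 : x.1 = ((n + 1 : ℕ) : ℝ) * tp n + s * tq n B) : s = B := by
  obtain ⟨h1, h2, -⟩ := hx
  rw [two_zpow_neg_qq_sub_one, hx1] at h1
  rw [hx1] at h2
  push_cast at h1 h2
  have hq := tq_pos n B
  have hle : (s : ℝ) ≤ B := le_of_mul_le_mul_right (by linarith) hq
  have hlt : (B : ℝ) < s + 1 := lt_of_mul_lt_mul_right (by linarith) hq.le
  have : s ≤ B := by exact_mod_cast hle
  have : B < s + 1 := by exact_mod_cast hlt
  omega

lemma Tracks.eq_of_inRfin {A : ℕ → ℕ} {c : ℕ × ℕ × (ℕ → ℕ)} (hc : Admissible n B A c)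
    (htr : Tracks n B c x) (hx : inRfin n B x) : c.1 = n + 1 ∧ c.2.1 = B := by
  have htop : c.1 = n + 1 := by
    by_contra hne
    have hcn : (c.1 : ℝ) ≤ n := by exact_mod_cast (by have := hc.le_succ; omega)
    have hx1 := (inStrip_of_fst_eq_enc hc.reg_le htr.1).2
    exact not_inRfin_of_fst_le (by nlinarith [tp_pos n]) hx
  exact ⟨htop, eq_of_fst_eq_of_inRfin hx (by rw [htr.1, fst_enc, htop])⟩

end FinalRegion

theorem backward_forward_identity_general (n B : ℕ) (A : ℕ → ℕ)
    (x y : ℝ × ℝ) (k : ℕ) (hx : inRfin n B x) (hy : inR0 n y)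
    (h : (fI n B A)^[k] y = x) :
    ∃ ε : ℕ → ℕ, (∀ j, ε j ≤ 1) ∧ (∑ i ∈ Finset.Icc 1 n, ε i * A i) = B ∧
      inRfin n B ((fI n B A)^[k] (enc n B (1, 0, ε))) := by
  set ε := orbitDigit n B A y
  have hc₀ : Admissible n B A (1, 0, ε) := admissible_start (orbitDigit_le_one y)
  obtain ⟨j, rfl⟩ : ∃ j, k = j + 1 := by
    refine Nat.exists_eq_add_one.2 (Nat.pos_of_ne_zero ?_)
    rintro rfl
    rw [iterate_zero_apply] at h
    subst h
    exact not_inRfin_of_fst_le (by have := tp_pos n; nlinarith [hy.2.1]) hx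
  set c := (TI n B A)^[j] (1, 0, ε)
  have hc : Admissible n B A c := (mapsTo_TI_admissible.iterate j) hc₀
  have htr : Tracks n B c x := by
    rcases absorbed_or_tracks_iterate (B := B) (A := A) hy j with habs | htr
    · rw [h] at habs
      linarith [hx.2.2.1, habs.1, bI_pos (n + 1)]
    · rwa [h] at htr
  obtain ⟨htop, hB⟩ := htr.eq_of_inRfin hc hx
  refine ⟨ε, orbitDigit_le_one y, ?_, ?_⟩
  · have := hc.reg_eq_sum hB.le
    rwa [hB, htop, snd_snd_TI_iterate, Finset.Ico_add_one_right_eq_Icc, eq_comm] at this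
  · rw [fI_iterate_enc hc₀, iterate_succ_apply', TI_of_fst_eq htop]
    have h2 : (enc n B c).2 = bI (n + 1) := by simp [enc, htop]
    exact ⟨htr.1 ▸ hx.1, htr.1 ▸ hx.2.1, h2 ▸ le_rfl, by linarith [bI_pos (n + 1)]⟩

theorem backward_forward_identity (n B : ℕ) (A : ℕ → ℕ) (hA : ∀ j, A j ≤ B)
    (x y : ℝ × ℝ) (k : ℕ) (hx : inRfin n B x) (hy : inR0 n y)
    (h : (fI n B A)^[k] y = x) :
    ∃ ε : ℕ → ℕ, (∀ j, ε j ≤ 1) ∧ (∑ i ∈ Finset.Icc 1 n, ε i * A i) = B ∧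
      inRfin n B ((fI n B A)^[k] (enc n B (1, 0, ε))) :=
  backward_forward_identity_general n B A x y k hx hy h
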